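/- Let k be a natural number and let u : ℝ → ℂ be four times continuously differentiable with u(0) = 0 and M₄ := sup_{w ∈ ℝ} (1 + w²)^{-k} |u''''(w)| < ∞. Then there is a constant C > 0, depending only on k, such that for all t ≥ 1, |∫_ℝ e^{-t w²} u(w) dw − (√π / 4) · u''(0) · t^{-3/2}| ≤ C · M₄ · t^{-5/2}. -/

import Mathlib

/-!
Subtract from `u` its cubic Taylor polynomial at `0`. Against the weight `e^{-tw²}` the odd
monomials integrate to zero, the constant term vanishes because `u 0 = 0`, and `w²` contributes
`Γ(3/2) t^{-3/2} = (√π/2) t^{-3/2}`. Iterating the mean value inequality bounds the remainder by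
`M₄ (1 + w²)^k |w|⁴ ≤ 2^{k-1} M₄ (|w|⁴ + |w|^{2k+4})`, and the absolute moments
`∫ |w|^n e^{-tw²} dw = Γ((n+1)/2) t^{-(n+1)/2}` are all `O(t^{-5/2})` for `n ≥ 4` and `t ≥ 1`.
-/

open MeasureTheory Real Set
open scoped Nat

section

variable {E : Type*} [NormedAddCommGroup E] [NormedSpace ℝ E]

theorem hasDerivAt_sum_pow_div_factorial_smul (c : ℕ → E) (n : ℕ) (x : ℝ) :
    HasDerivAt (fun y : ℝ => ∑ j ∈ Finset.range (n + 1), (y ^ j / j !) • c j)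
      (∑ j ∈ Finset.range n, (x ^ j / j !) • c (j + 1)) x := by
  have hterm : ∀ j, HasDerivAt (fun y : ℝ => (y ^ (j + 1) / (j + 1)!) • c (j + 1))
      ((x ^ j / j !) • c (j + 1)) x := by
    intro j
    convert ((hasDerivAt_pow (j + 1) x).div_const ((j + 1)! : ℝ)).smul_const (c (j + 1))
      using 2
    push_cast [Nat.factorial_succ]
    field_simp
  simp_rw [Finset.sum_range_succ' _ n, pow_zero, Nat.factorial_zero, Nat.cast_one, div_one,
    one_smul]
  exact (HasDerivAt.fun_sum fun j _ => hterm j).add_const _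

theorem norm_sub_sum_taylor_le {f : ℝ → E} {n : ℕ} (hf : ContDiff ℝ n f) {w C : ℝ}
    (hC : ∀ x ∈ uIcc 0 w, ‖iteratedDeriv n f x‖ ≤ C) :
    ‖f w - ∑ j ∈ Finset.range n, (w ^ j / j !) • iteratedDeriv j f 0‖ ≤ C * |w| ^ n := by
  induction n generalizing f w with
  | zero => simpa using hC w right_mem_uIcc
  | succ n ih =>
    have hf' : ContDiff ℝ (n + 1) f := mod_cast hf
    obtain ⟨hdiff, -, hfd⟩ := contDiff_succ_iff_deriv.mp hf'
    have hC0 : 0 ≤ C := (norm_nonneg _).trans (hC 0 left_mem_uIcc)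
    have hderiv : ∀ x, HasDerivAt
        (fun y => f y - ∑ j ∈ Finset.range (n + 1), (y ^ j / j !) • iteratedDeriv j f 0)
        (deriv f x - ∑ j ∈ Finset.range n, (x ^ j / j !) • iteratedDeriv j (deriv f) 0) x := by
      intro x
      simp only [← iteratedDeriv_succ']
      exact (hdiff x).hasDerivAt.sub (hasDerivAt_sum_pow_div_factorial_smul _ n x)
    have hbound : ∀ x ∈ uIcc 0 w,
        ‖deriv f x - ∑ j ∈ Finset.range n, (x ^ j / j !) • iteratedDeriv j (deriv f) 0‖
          ≤ C * |w| ^ n := by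
      intro x hx
      have hxw : |x| ≤ |w| := by simpa using abs_sub_left_of_mem_uIcc hx
      refine (ih hfd fun y hy => ?_).trans (by gcongr)
      rw [← iteratedDeriv_succ']
      exact hC y (uIcc_subset_uIcc left_mem_uIcc hx hy)
    have hmvt := (convex_uIcc 0 w).norm_image_sub_le_of_norm_hasDerivWithin_le
      (fun x _ => (hderiv x).hasDerivWithinAt) hbound left_mem_uIcc right_mem_uIcc
    simpa [Finset.sum_range_succ', pow_succ, mul_assoc] using hmvt

theorem norm_sub_sum_taylor_le_of_norm_iteratedDeriv_le {f : ℝ → E} {n k : ℕ} {M : ℝ}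
    (hf : ContDiff ℝ n f) (hM : ∀ x, ‖iteratedDeriv n f x‖ ≤ M * (1 + x ^ 2) ^ k) (w : ℝ) :
    ‖f w - ∑ j ∈ Finset.range n, (w ^ j / j !) • iteratedDeriv j f 0‖
      ≤ M * (1 + w ^ 2) ^ k * |w| ^ n := by
  have hM0 : 0 ≤ M := by simpa using (norm_nonneg _).trans (hM 0)
  refine norm_sub_sum_taylor_le hf fun x hx => (hM x).trans ?_
  have hxw : |x| ≤ |w| := by simpa using abs_sub_left_of_mem_uIcc hx
  have : x ^ 2 ≤ w ^ 2 := sq_le_sq.mpr hxw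
  gcongr

theorem integrable_pow_mul_exp_neg_mul_sq (n : ℕ) {b : ℝ} (hb : 0 < b) :
    Integrable fun x : ℝ => x ^ n * rexp (-b * x ^ 2) := by
  simpa [Real.rpow_natCast] using
    integrable_rpow_mul_exp_neg_mul_sq hb (s := n) (by linarith [n.cast_nonneg (α := ℝ)])

theorem integrable_abs_pow_mul_exp_neg_mul_sq (n : ℕ) {b : ℝ} (hb : 0 < b) :
    Integrable fun x : ℝ => |x| ^ n * rexp (-b * x ^ 2) := by
  simpa [abs_mul, abs_pow] using (integrable_pow_mul_exp_neg_mul_sq n hb).abs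

theorem integral_abs_pow_mul_exp_neg_mul_sq (n : ℕ) {b : ℝ} (hb : 0 < b) :
    ∫ x : ℝ, |x| ^ n * rexp (-b * x ^ 2) = Gamma ((n + 1) / 2) * b ^ (-(n + 1) / 2 : ℝ) := by
  have hcomp : (fun x : ℝ => |x| ^ n * rexp (-b * x ^ 2))
      = fun x => (fun y : ℝ => y ^ n * rexp (-b * y ^ 2)) |x| := by
    simp only [sq_abs]
  rw [hcomp, integral_comp_abs (f := fun y : ℝ => y ^ n * rexp (-b * y ^ 2))]
  have hrpow : ∫ x in Ioi (0 : ℝ), x ^ n * rexp (-b * x ^ 2)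
      = ∫ x in Ioi (0 : ℝ), x ^ (n : ℝ) * rexp (-b * x ^ (2 : ℝ)) :=
    setIntegral_congr_fun measurableSet_Ioi fun x _ => by
      rw [Real.rpow_natCast, Real.rpow_two]
  rw [hrpow, integral_rpow_mul_exp_neg_mul_rpow two_pos (by linarith [n.cast_nonneg (α := ℝ)]) hb]
  ring

theorem integral_pow_mul_exp_neg_mul_sq_of_odd {n : ℕ} (hn : Odd n) (b : ℝ) :
    ∫ x : ℝ, x ^ n * rexp (-b * x ^ 2) = 0 := by
  have h := integral_neg_eq_self (fun x : ℝ => x ^ n * rexp (-b * x ^ 2)) volume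
  simp only [hn.neg_pow, neg_sq, neg_mul, integral_neg] at h ⊢
  linarith

theorem integral_sq_mul_exp_neg_mul_sq {b : ℝ} (hb : 0 < b) :
    ∫ x : ℝ, x ^ 2 * rexp (-b * x ^ 2) = √π / 2 * b ^ (-3 / 2 : ℝ) := by
  have h := integral_abs_pow_mul_exp_neg_mul_sq 2 hb
  simp only [sq_abs, Nat.cast_ofNat] at h
  rw [h, show ((2 : ℝ) + 1) / 2 = 1 / 2 + 1 by norm_num, Gamma_add_one (by norm_num),
    Gamma_one_half_eq]
  ring_nf

theorem one_add_sq_pow_mul_abs_pow_le (k n : ℕ) (w : ℝ) :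
    (1 + w ^ 2) ^ k * |w| ^ n ≤ 2 ^ (k - 1) * (|w| ^ n + |w| ^ (n + 2 * k)) := by
  have h := add_pow_le zero_le_one (sq_nonneg w) k
  calc (1 + w ^ 2) ^ k * |w| ^ n ≤ 2 ^ (k - 1) * (1 ^ k + (w ^ 2) ^ k) * |w| ^ n := by gcongr
    _ = 2 ^ (k - 1) * (|w| ^ n + |w| ^ (n + 2 * k)) := by
      rw [← sq_abs, ← pow_mul, pow_add]; ring

theorem norm_exp_neg_mul_sq_smul_le {g : ℝ → E} {M : ℝ} {k n : ℕ}
    (hg : ∀ w, ‖g w‖ ≤ M * (1 + w ^ 2) ^ k * |w| ^ n) (b w : ℝ) :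
    ‖rexp (-b * w ^ 2) • g w‖
      ≤ M * 2 ^ (k - 1)
        * (|w| ^ n * rexp (-b * w ^ 2) + |w| ^ (n + 2 * k) * rexp (-b * w ^ 2)) := by
  have hM : 0 ≤ M := by simpa using (norm_nonneg _).trans (hg 1)
  rw [norm_smul, Real.norm_of_nonneg (exp_pos _).le]
  calc rexp (-b * w ^ 2) * ‖g w‖ ≤ rexp (-b * w ^ 2) * (M * ((1 + w ^ 2) ^ k * |w| ^ n)) := by
        rw [← mul_assoc M]; gcongr; exact hg w
    _ ≤ rexp (-b * w ^ 2) * (M * (2 ^ (k - 1) * (|w| ^ n + |w| ^ (n + 2 * k)))) := by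
        gcongr rexp (-b * w ^ 2) * (M * ?_)
        exact one_add_sq_pow_mul_abs_pow_le k n w
    _ = _ := by ring

theorem integrable_exp_neg_mul_sq_smul {g : ℝ → E} (hgm : AEStronglyMeasurable g) {M b : ℝ}
    {k n : ℕ} (hb : 0 < b) (hg : ∀ w, ‖g w‖ ≤ M * (1 + w ^ 2) ^ k * |w| ^ n) :
    Integrable fun w => rexp (-b * w ^ 2) • g w :=
  Integrable.mono' (((integrable_abs_pow_mul_exp_neg_mul_sq n hb).add
      (integrable_abs_pow_mul_exp_neg_mul_sq (n + 2 * k) hb)).const_mul _)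
    ((by fun_prop : Continuous fun w : ℝ => rexp (-b * w ^ 2)).aestronglyMeasurable.smul hgm)
    (ae_of_all _ (norm_exp_neg_mul_sq_smul_le hg b))

theorem norm_integral_exp_neg_mul_sq_smul_le {g : ℝ → E} {M b : ℝ} {k n : ℕ} (hb : 1 ≤ b)
    (hg : ∀ w, ‖g w‖ ≤ M * (1 + w ^ 2) ^ k * |w| ^ n) :
    ‖∫ w, rexp (-b * w ^ 2) • g w‖
      ≤ 2 ^ (k - 1) * (Gamma ((n + 1) / 2) + Gamma ((n + 2 * k + 1) / 2)) * M
        * b ^ (-(n + 1) / 2 : ℝ) := by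
  have hb0 : 0 < b := by linarith
  have hM : 0 ≤ M := by simpa using (norm_nonneg _).trans (hg 1)
  have hdecay : b ^ (-(n + 2 * k + 1) / 2 : ℝ) ≤ b ^ (-(n + 1) / 2 : ℝ) :=
    rpow_le_rpow_of_exponent_le hb (by linarith [k.cast_nonneg (α := ℝ)])
  calc ‖∫ w, rexp (-b * w ^ 2) • g w‖
      ≤ ∫ w, M * 2 ^ (k - 1) * (|w| ^ n * rexp (-b * w ^ 2)
          + |w| ^ (n + 2 * k) * rexp (-b * w ^ 2)) :=
        norm_integral_le_of_norm_le (((integrable_abs_pow_mul_exp_neg_mul_sq n hb0).add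
          (integrable_abs_pow_mul_exp_neg_mul_sq (n + 2 * k) hb0)).const_mul _)
          (ae_of_all _ (norm_exp_neg_mul_sq_smul_le hg b))
    _ = M * 2 ^ (k - 1) * (Gamma ((n + 1) / 2) * b ^ (-(n + 1) / 2 : ℝ)
          + Gamma ((n + 2 * k + 1) / 2) * b ^ (-(n + 2 * k + 1) / 2 : ℝ)) := by
        rw [integral_const_mul, integral_add (integrable_abs_pow_mul_exp_neg_mul_sq n hb0)
          (integrable_abs_pow_mul_exp_neg_mul_sq (n + 2 * k) hb0),
          integral_abs_pow_mul_exp_neg_mul_sq n hb0,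
          integral_abs_pow_mul_exp_neg_mul_sq (n + 2 * k) hb0]
        push_cast
        rfl
    _ ≤ M * 2 ^ (k - 1) * (Gamma ((n + 1) / 2) * b ^ (-(n + 1) / 2 : ℝ)
          + Gamma ((n + 2 * k + 1) / 2) * b ^ (-(n + 1) / 2 : ℝ)) := by
        gcongr
    _ = _ := by ring

theorem exp_neg_mul_sq_smul_sum_eq (s : Finset ℕ) (c : ℕ → E) (b x : ℝ) :
    rexp (-b * x ^ 2) • ∑ j ∈ s, (x ^ j / j !) • c j
      = ∑ j ∈ s, (x ^ j * rexp (-b * x ^ 2) / j !) • c j := by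
  simp_rw [Finset.smul_sum, smul_smul, mul_div_assoc', mul_comm]

theorem integrable_exp_neg_mul_sq_smul_sum (s : Finset ℕ) (c : ℕ → E) {b : ℝ} (hb : 0 < b) :
    Integrable fun x : ℝ => rexp (-b * x ^ 2) • ∑ j ∈ s, (x ^ j / j !) • c j := by
  simp_rw [exp_neg_mul_sq_smul_sum_eq]
  exact integrable_finsetSum _ fun j _ =>
    ((integrable_pow_mul_exp_neg_mul_sq j hb).div_const _).smul_const _

theorem integral_exp_neg_mul_sq_smul_sum [CompleteSpace E] (s : Finset ℕ) (c : ℕ → E) {b : ℝ}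
    (hb : 0 < b) :
    ∫ x : ℝ, rexp (-b * x ^ 2) • ∑ j ∈ s, (x ^ j / j !) • c j
      = ∑ j ∈ s, ((∫ x : ℝ, x ^ j * rexp (-b * x ^ 2)) / j !) • c j := by
  simp_rw [exp_neg_mul_sq_smul_sum_eq]
  rw [integral_finsetSum _ fun j _ =>
    ((integrable_pow_mul_exp_neg_mul_sq j hb).div_const _).smul_const _]
  simp_rw [integral_smul_const, integral_div]

end

/-- Laplace-type asymptotic lemma, second part: if `u : ℝ → ℂ` is `C⁴` with `u(0) = 0` and
`M₄ = sup_w (1+w²)^{-k} |u''''(w)| < ∞`, then there is `C > 0` depending only on `k`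
such that for all `t ≥ 1`,
`|∫ e^{-tw²} u(w) dw − (√π/4) · u''(0) · t^{-3/2}| ≤ C · M₄ · t^{-5/2}`. -/
theorem stmt_1 (k : ℕ) :
    ∃ C : ℝ, 0 < C ∧
      ∀ (u : ℝ → ℂ) (M₄ : ℝ),
        ContDiff ℝ 4 u →
        u 0 = 0 →
        (∀ w : ℝ, ((1 + w ^ 2) ^ k)⁻¹ * ‖iteratedDeriv 4 u w‖ ≤ M₄) →
        ∀ t : ℝ, 1 ≤ t →
          ‖(∫ w : ℝ, Complex.exp (-(t : ℂ) * (w : ℂ) ^ 2) * u w) -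
              ((Real.sqrt π / 4 * t ^ (-(3 : ℝ) / 2) : ℝ) : ℂ) * iteratedDeriv 2 u 0‖ ≤
            C * M₄ * t ^ (-(5 : ℝ) / 2) := by
  refine ⟨2 ^ (k - 1) * (Gamma (5 / 2) + Gamma ((2 * k + 5) / 2)), by positivity, ?_⟩
  intro u M₄ hu hu0 hM t ht
  have ht0 : 0 < t := by linarith
  set P : ℝ → ℂ := fun w => ∑ j ∈ Finset.range 4, (w ^ j / j !) • iteratedDeriv j u 0
  have hrem : ∀ w, ‖u w - P w‖ ≤ M₄ * (1 + w ^ 2) ^ k * |w| ^ 4 :=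
    norm_sub_sum_taylor_le_of_norm_iteratedDeriv_le hu fun x => by
      rw [mul_comm, ← inv_mul_le_iff₀ (by positivity)]
      exact hM x
  have hP : ∫ w, rexp (-t * w ^ 2) • P w
      = ((√π / 4 * t ^ (-(3 : ℝ) / 2) : ℝ) : ℂ) * iteratedDeriv 2 u 0 := by
    rw [integral_exp_neg_mul_sq_smul_sum _ _ ht0]
    simp only [Finset.sum_range_succ, Finset.sum_range_zero, iteratedDeriv_zero, hu0,
      integral_pow_mul_exp_neg_mul_sq_of_odd odd_one,
      integral_pow_mul_exp_neg_mul_sq_of_odd (by decide : Odd 3),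
      integral_sq_mul_exp_neg_mul_sq ht0, zero_div, zero_add,
      Complex.real_smul]
    push_cast [Nat.factorial_two]
    ring
  have hsplit : ∀ w : ℝ, Complex.exp (-(t : ℂ) * (w : ℂ) ^ 2) * u w
      = rexp (-t * w ^ 2) • P w + rexp (-t * w ^ 2) • (u w - P w) := by
    intro w
    rw [← smul_add, add_sub_cancel, Complex.real_smul]
    push_cast
    ring
  have hP_int : Integrable fun w => rexp (-t * w ^ 2) • P w :=
    integrable_exp_neg_mul_sq_smul_sum _ _ ht0
  have hrem_int : Integrable fun w => rexp (-t * w ^ 2) • (u w - P w) :=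
    integrable_exp_neg_mul_sq_smul (hu.continuous.sub (by fun_prop)).aestronglyMeasurable
      ht0 hrem
  calc _ = ‖∫ w, rexp (-t * w ^ 2) • (u w - P w)‖ := by
        simp_rw [hsplit]
        rw [integral_add hP_int hrem_int, hP, add_sub_cancel_left]
    _ ≤ _ := norm_integral_exp_neg_mul_sq_smul_le ht hrem
    _ = _ := by push_cast; ring_nf
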